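/- arXiv:1508.00717 — 3 statements merged into one kernel-verified Lean document; each statement's English description precedes it below -/
import Mathlib

section
/- Let FH be a Frobenius group with kernel F and complement H acting on a group G. If the action of F on G is nontrivial, then H acts faithfully on G. -/
/-- The subgroup of fixed points of a subgroup `S` of a group `A`
acting on `G` by automorphisms. -/
def autFixed {A G : Type*} [Group A] [Group G] [MulDistribMulAction A G]
    (S : Subgroup A) : Subgroup G where
  carrier := {g | ∀ a ∈ S, a • g = g}
  one_mem' := fun a _ => smul_one a
  mul_mem' := fun {x y} hx hy a ha => by rw [smul_mul', hx a ha, hy a ha]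
  inv_mem' := fun {x} hx a ha => by rw [smul_inv', hx a ha]

/-- In any action of a Frobenius group `FH` on a finite group `G` with
nontrivial action of the kernel `F`, the complement `H` acts faithfully. -/
theorem stmt3 {A G : Type*} [Group A] [Group G] [Finite A] [Finite G]
    [MulDistribMulAction A G]
    (F H : Subgroup A) (hFnorm : F.Normal) (hsup : F ⊔ H = ⊤) (hinf : F ⊓ H = ⊥)
    (hHne : H ≠ ⊥)
    (hfrob : ∀ h ∈ H, h ≠ 1 → ∀ f ∈ F, h * f * h⁻¹ = f → f = 1)
    (hFnontriv : ∃ f ∈ F, ∃ g : G, f • g ≠ g) :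
    ∀ h ∈ H, (∀ g : G, h • g = g) → h = 1 := by
  intro h hh hact
  by_contra hne
  obtain ⟨f0, hf0, g0, hg0⟩ := hFnontriv
  apply hg0
  have hinv : ∀ g : G, h⁻¹ • g = g := fun g => by
    conv_lhs => rw [← hact g, inv_smul_smul]
  -- the map f ↦ f⁻¹ (h f h⁻¹) on F
  have inj : Function.Injective (fun f' : F =>
      (⟨(f' : A)⁻¹ * (h * f' * h⁻¹),
        mul_mem (inv_mem f'.2) (hFnorm.conj_mem _ f'.2 h)⟩ : F)) := by
    intro a b hab
    have hab' : (a : A)⁻¹ * (h * a * h⁻¹) = (b : A)⁻¹ * (h * b * h⁻¹) :=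
      congrArg Subtype.val hab
    have hv : h * (b : A) * h⁻¹ = (b : A) * (a : A)⁻¹ * (h * a * h⁻¹) := by
      conv_rhs => rw [mul_assoc, hab']
      group
    have hfix : h * ((b : A) * (a : A)⁻¹) * h⁻¹ = (b : A) * (a : A)⁻¹ := by
      calc h * ((b : A) * (a : A)⁻¹) * h⁻¹
          = (h * (b : A) * h⁻¹) * (h * (a : A) * h⁻¹)⁻¹ := by group
        _ = ((b : A) * (a : A)⁻¹ * (h * a * h⁻¹)) * (h * (a : A) * h⁻¹)⁻¹ := by rw [hv]
        _ = (b : A) * (a : A)⁻¹ := by group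
    have hmem : (b : A) * (a : A)⁻¹ ∈ F := mul_mem b.2 (inv_mem a.2)
    have h1 : (b : A) * (a : A)⁻¹ = 1 := hfrob h hh hne _ hmem hfix
    have : (b : A) = (a : A) := by
      rw [mul_inv_eq_one] at h1; exact h1
    exact Subtype.ext this.symm
  have surj := Finite.injective_iff_surjective.mp inj
  -- every element of F acts trivially
  have htriv : ∀ f ∈ F, ∀ g : G, f • g = g := by
    intro f hf g
    obtain ⟨f', hf'⟩ := surj ⟨f, hf⟩
    have hf'' : (f' : A)⁻¹ * (h * f' * h⁻¹) = f := congrArg Subtype.val hf'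
    rw [← hf'']
    have : ((f' : A)⁻¹ * (h * f' * h⁻¹)) • g
        = (f' : A)⁻¹ • h • (f' : A) • h⁻¹ • g := by
      simp [mul_smul]
    rw [this, hinv, hact, inv_smul_smul]
  exact htriv f0 hf0 g0
end

section
/- Let G be a nontrivial finite group admitting an action of a Frobenius group FH with kernel F and complement H, and let K be the kernel of the action of FH on G. If C_G(F) = 1, then K is a proper subgroup of F, and FH/K is a Frobenius group with kernel F/K and complement HK/K. -/
/-- If a Frobenius group `FH` acts on a nontrivial finite group `G` with
`C_G(F) = 1` and `K` is the kernel of the action, then `K < F` and `FH/K` is a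
Frobenius group with kernel `F/K` and complement `HK/K`, i.e. `C_{F/K}(hK) = 1`
for every `h ∈ H` not in `K`. -/
theorem stmt4 {A G : Type*} [Group A] [Group G] [Finite A] [Finite G]
    [Nontrivial G] [MulDistribMulAction A G]
    (F H : Subgroup A) (hFnorm : F.Normal) (hsup : F ⊔ H = ⊤) (hinf : F ⊓ H = ⊥)
    (hHne : H ≠ ⊥)
    (hfrob : ∀ h ∈ H, h ≠ 1 → ∀ f ∈ F, h * f * h⁻¹ = f → f = 1)
    (hfpf : autFixed (G := G) F = ⊥)
    (K : Subgroup A) (hK : ∀ a : A, a ∈ K ↔ ∀ g : G, a • g = g) :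
    K < F ∧ ∀ h ∈ H, h ∉ K → ∀ f ∈ F, h * f * h⁻¹ * f⁻¹ ∈ K → f ∈ K := by
  haveI := hFnorm
  have hK1 : (1 : A) ∈ K := (hK 1).2 (fun g => one_smul A g)
  have hKnormal : ∀ a ∈ K, ∀ b : A, b * a * b⁻¹ ∈ K := by
    intro a ha b
    rw [hK]
    intro g
    rw [mul_smul, mul_smul, (hK a).1 ha, smul_inv_smul]
  -- F is not contained in K
  have hFK : ¬ (∀ y ∈ F, y ∈ K) := by
    intro hall
    obtain ⟨g, hg⟩ := exists_ne (1 : G)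
    apply hg
    have hmem : g ∈ autFixed (G := G) F := fun a ha => (hK a).1 (hall a ha) g
    rwa [hfpf, Subgroup.mem_bot] at hmem
  set N : Subgroup A := F ⊓ K with hNdef
  have hNnormal : ∀ a ∈ N, ∀ b : A, b * a * b⁻¹ ∈ N := fun a ha b =>
    ⟨hFnorm.conj_mem a ha.1 b, hKnormal a ha.2 b⟩
  -- Key lemma: for h ∈ H, h ≠ 1, if [h, y] ∈ N with y ∈ F, then y ∈ N.
  have lemA : ∀ h ∈ H, h ≠ 1 → ∀ y ∈ F, h * y * h⁻¹ * y⁻¹ ∈ N → y ∈ N := by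
    intro h hh hne y hy hc
    -- injectivity of x ↦ x⁻¹ * (h * x * h⁻¹) on F
    have inj : ∀ x ∈ F, ∀ x' ∈ F,
        x⁻¹ * (h * x * h⁻¹) = x'⁻¹ * (h * x' * h⁻¹) → x = x' := by
      intro x hx x' hx' heq
      have e2 : x' * (x⁻¹ * (h * x * h⁻¹)) = h * x' * h⁻¹ := by
        rw [heq]; group
      have key : h * (x' * x⁻¹) * h⁻¹ = x' * x⁻¹ := by
        calc h * (x' * x⁻¹) * h⁻¹
            = (h * x' * h⁻¹) * (h * x * h⁻¹)⁻¹ := by group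
          _ = (x' * (x⁻¹ * (h * x * h⁻¹))) * (h * x * h⁻¹)⁻¹ := by rw [e2]
          _ = x' * x⁻¹ := by group
      have := hfrob h hh hne (x' * x⁻¹) (mul_mem hx' (inv_mem hx)) key
      exact (mul_inv_eq_one.mp this).symm
    -- the map φ : N → N
    let φ : N → N := fun n =>
      ⟨(n : A)⁻¹ * (h * (n : A) * h⁻¹),
        mul_mem (inv_mem n.2) (hNnormal (n : A) n.2 h)⟩
    have φinj : Function.Injective φ := by
      intro n n' hnn
      have := Subtype.ext_iff.mp hnn
      exact Subtype.ext (inj (n : A) n.2.1 (n' : A) n'.2.1 this)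
    have φsurj : Function.Surjective φ := Finite.injective_iff_surjective.mp φinj
    have hmem : y⁻¹ * (h * y * h⁻¹) ∈ N := by
      have h1 : y⁻¹ * (h * y * h⁻¹ * y⁻¹) * y⁻¹⁻¹ ∈ N := hNnormal _ hc y⁻¹
      have h2 : y⁻¹ * (h * y * h⁻¹) = y⁻¹ * (h * y * h⁻¹ * y⁻¹) * y⁻¹⁻¹ := by group
      rw [h2]; exact h1
    obtain ⟨n, hn⟩ := φsurj ⟨y⁻¹ * (h * y * h⁻¹), hmem⟩
    have heq : (n : A)⁻¹ * (h * (n : A) * h⁻¹) = y⁻¹ * (h * y * h⁻¹) :=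
      Subtype.ext_iff.mp hn
    have : (n : A) = y := inj (n : A) n.2.1 y hy heq
    exact this ▸ n.2
  -- part 2
  have part2 : ∀ h ∈ H, h ∉ K → ∀ f ∈ F, h * f * h⁻¹ * f⁻¹ ∈ K → f ∈ K := by
    intro h hh hhK f hf hcom
    have hne : h ≠ 1 := fun e => hhK (e ▸ hK1)
    have hmemF : h * f * h⁻¹ * f⁻¹ ∈ F :=
      mul_mem (hFnorm.conj_mem f hf h) (inv_mem hf)
    exact (lemA h hh hne f hf ⟨hmemF, hcom⟩).2
  refine ⟨lt_of_le_of_ne ?_ ?_, part2⟩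
  · -- K ≤ F
    intro k hk
    open Pointwise in
    have hk' : k ∈ (F : Set A) * (H : Set A) := by
      rw [← Subgroup.normal_mul F H, hsup]
      simp
    obtain ⟨f, hf, h, hh, rfl⟩ := hk'
    by_cases hne : h = 1
    · subst hne; simpa using hf
    · exfalso
      have hcK : (f * h) * f * (f * h)⁻¹ * f⁻¹ ∈ K := by
        have h2 : (f * h) * f * (f * h)⁻¹ * f⁻¹ = (f * h) * (f * (f * h)⁻¹ * f⁻¹) := by
          group
        rw [h2]; exact mul_mem hk (hKnormal _ (inv_mem hk) f)
      have hcN : (f * h) * f * (f * h)⁻¹ * f⁻¹ ∈ N :=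
        Subgroup.mem_inf.mpr ⟨mul_mem (hFnorm.conj_mem f hf (f * h)) (inv_mem hf), hcK⟩
      have hcom : h * f * h⁻¹ * f⁻¹ ∈ N := by
        have h1 : f⁻¹ * ((f * h) * f * (f * h)⁻¹ * f⁻¹) * f⁻¹⁻¹ ∈ N := hNnormal _ hcN f⁻¹
        have h2 : h * f * h⁻¹ * f⁻¹ = f⁻¹ * ((f * h) * f * (f * h)⁻¹ * f⁻¹) * f⁻¹⁻¹ := by
          group
        rw [h2]; exact h1
      have hfN : f ∈ N := lemA h hh hne f hf hcom
      have hhK : h ∈ K := by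
        have h2 : h = f⁻¹ * (f * h) := by group
        rw [h2]; exact mul_mem (inv_mem hfN.2) hk
      apply hFK
      intro y hy
      have hcy : h * y * h⁻¹ * y⁻¹ ∈ N := by
        refine Subgroup.mem_inf.mpr ⟨mul_mem (hFnorm.conj_mem y hy h) (inv_mem hy), ?_⟩
        have h2 : h * y * h⁻¹ * y⁻¹ = h * (y * h⁻¹ * y⁻¹) := by group
        rw [h2]; exact mul_mem hhK (hKnormal _ (inv_mem hhK) y)
      exact (lemA h hh hne y hy hcy).2
  · -- K ≠ F
    intro e
    exact hFK (fun y hy => by rw [e]; exact hy)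
end

section
/- Let FH be a Frobenius group with kernel F and complement H, and let K ≤ F be a normal subgroup of FH with K ≠ F. Then FH/K is a Frobenius group with kernel F/K and complement HK/K. -/
/-- Let `FH` be a finite Frobenius group with kernel `F` and complement `H`,
and let `K` be a normal subgroup of `FH` with `K ≤ F` and `K ≠ F`. Then `FH/K`
is a Frobenius group with kernel `F/K` and complement `HK/K`: for every
`h ∈ H` with `hK` nontrivial, `C_{F/K}(hK) = 1`. -/
theorem stmt19 {A : Type*} [Group A] [Finite A]
    (F H : Subgroup A) (hFnorm : F.Normal) (hsup : F ⊔ H = ⊤) (hinf : F ⊓ H = ⊥)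
    (hHne : H ≠ ⊥)
    (hfrob : ∀ h ∈ H, h ≠ 1 → ∀ f ∈ F, h * f * h⁻¹ = f → f = 1)
    (K : Subgroup A) (hKnorm : K.Normal) (hKF : K ≤ F) (hKne : K ≠ F) :
    ∀ h ∈ H, h ∉ K → ∀ f ∈ F, h * f * h⁻¹ * f⁻¹ ∈ K → f ∈ K := by
  intro h hH hhK f hF hcomm
  have hne1 : h ≠ 1 := fun e => hhK (e ▸ K.one_mem)
  -- injectivity of x ↦ h x h⁻¹ x⁻¹ on F
  have inj : ∀ x ∈ F, ∀ y ∈ F,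
      h * x * h⁻¹ * x⁻¹ = h * y * h⁻¹ * y⁻¹ → x = y := by
    intro x hx y hy heq
    have e1 : h * x * h⁻¹ = h * y * h⁻¹ * y⁻¹ * x := by
      have := congrArg (· * x) heq
      simpa [mul_assoc] using this
    have key : h * (y⁻¹ * x) * h⁻¹ = y⁻¹ * x := by
      calc h * (y⁻¹ * x) * h⁻¹ = (h * y * h⁻¹)⁻¹ * (h * x * h⁻¹) := by group
        _ = (h * y * h⁻¹)⁻¹ * (h * y * h⁻¹ * y⁻¹ * x) := by rw [e1]
        _ = y⁻¹ * x := by group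
    have := hfrob h hH hne1 (y⁻¹ * x) (F.mul_mem (F.inv_mem hy) hx) key
    have : y⁻¹ * x = 1 := this
    calc x = y * (y⁻¹ * x) := by group
      _ = y := by rw [this, mul_one]
  -- the map restricted to K is injective K → K, hence surjective
  let φ : K → K := fun k =>
    ⟨h * k * h⁻¹ * (k : A)⁻¹,
      K.mul_mem (hKnorm.conj_mem k k.2 h) (K.inv_mem k.2)⟩
  have hφinj : Function.Injective φ := by
    intro a b hab
    have := inj a (hKF a.2) b (hKF b.2) (Subtype.ext_iff.mp hab)
    exact Subtype.ext this
  have hφsurj : Function.Surjective φ :=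
    Finite.surjective_of_injective hφinj
  obtain ⟨k, hk⟩ := hφsurj ⟨h * f * h⁻¹ * f⁻¹, hcomm⟩
  have : (k : A) = f :=
    inj k (hKF k.2) f hF (Subtype.ext_iff.mp hk)
  exact this ▸ k.2
end
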